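/- (Theorem 1, Part 2.) In the AQE tabular setting, the expected post-update estimation bias is nondecreasing in the keep parameter K: for all integers 1 ≤ K ≤ N−1, E[Z_{K,N}] ≤ E[Z_{K+1,N}]. -/

import Mathlib

/-!
The bias is monotone in `K` pointwise, not only in expectation. If `y₀ ≤ y₁ ≤ ⋯` are the sorted
values and `S` is the sum of the first `K` of them, then `S ≤ K y_K`, hence
`S / K ≤ (S + y_K) / (K + 1)`; taking the maximum over actions and multiplying by `γ > 0`
preserves this. Both expectations exist because `|Z| ≤ γ (∑ |Q| + |max Qπ|)`, and `Z` is measurable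
because the sum of the `K` smallest entries is the minimum of the sums over `K`-subsets, a
continuous function of the entries.
-/

open MeasureTheory ProbabilityTheory Finset

/-- The average of the `K` smallest values among `x 0, …, x (N-1)`:
sort the tuple nondecreasingly and average the first `K` entries. -/
noncomputable def avgKSmallest {N : ℕ} (K : ℕ) (x : Fin N → ℝ) : ℝ :=
  (∑ i ∈ Finset.univ.filter (fun i : Fin N => (i : ℕ) < K), x (Tuple.sort x i)) / K

noncomputable def fmax {A : Type*} [Fintype A] [Nonempty A] (f : A → ℝ) : ℝ :=
  Finset.univ.sup' Finset.univ_nonempty f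

lemma Fin.val_le_of_strictMono {K N : ℕ} {f : Fin K → Fin N} (hf : StrictMono f) (i : Fin K) :
    (i : ℕ) ≤ f i := by
  simpa using card_le_card_of_injOn f (s := Iio i) (t := Iio (f i))
    (fun j hj => by simpa using hf (by simpa using hj)) hf.injective.injOn

lemma Fin.filter_val_lt_eq_map_castLEEmb {K N : ℕ} (hK : K ≤ N) :
    ({i : Fin N | (i : ℕ) < K} : Finset (Fin N)) = univ.map (Fin.castLEEmb hK) := by
  ext i
  simp only [mem_filter, mem_univ, true_and, mem_map, Fin.coe_castLEEmb]
  exact ⟨fun h => ⟨⟨i, h⟩, rfl⟩, by rintro ⟨j, rfl⟩; exact j.2⟩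

lemma Fin.filter_val_lt_succ {K N : ℕ} (hK : K < N) :
    ({i : Fin N | (i : ℕ) < K + 1} : Finset (Fin N))
      = insert ⟨K, hK⟩ ({i : Fin N | (i : ℕ) < K} : Finset (Fin N)) := by
  ext i
  simp only [mem_filter, mem_univ, true_and, mem_insert, Fin.ext_iff]
  omega

section SortedPrefix

variable {M : Type*} [AddCommMonoid M] [LinearOrder M] [IsOrderedAddMonoid M] {N K : ℕ}

lemma sum_filter_val_lt_le_sum_of_monotone {y : Fin N → M} (hy : Monotone y) (hK : K ≤ N)
    {t : Finset (Fin N)} (ht : #t = K) :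
    ∑ i ∈ {i : Fin N | (i : ℕ) < K}, y i ≤ ∑ i ∈ t, y i := by
  rw [Fin.filter_val_lt_eq_map_castLEEmb hK, sum_map]
  conv_rhs => rw [← map_orderEmbOfFin_univ t ht, sum_map]
  exact sum_le_sum fun i _ =>
    hy (Fin.le_def.2 (Fin.val_le_of_strictMono (t.orderEmbOfFin ht).strictMono i))

lemma sum_sort_filter_val_lt_eq_inf' (hK : K ≤ N) (x : Fin N → M) :
    ∑ i ∈ {i : Fin N | (i : ℕ) < K}, x (Tuple.sort x i)
      = (powersetCard K (univ : Finset (Fin N))).inf'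
          (powersetCard_nonempty.2 (by simpa using hK)) (fun s => ∑ j ∈ s, x j) := by
  set σ := Tuple.sort x
  apply le_antisymm
  · refine le_inf' _ _ fun s hs => ?_
    have hst : ∑ j ∈ s, x j = ∑ i ∈ s.map σ.symm.toEmbedding, x (σ i) := by simp [sum_map]
    rw [hst]
    exact sum_filter_val_lt_le_sum_of_monotone (Tuple.monotone_sort x) hK
      (by rw [card_map, (mem_powersetCard.1 hs).2])
  · set P : Finset (Fin N) := {i : Fin N | (i : ℕ) < K}
    have hmem : P.map σ.toEmbedding ∈ powersetCard K univ := by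
      rw [mem_powersetCard, card_map, Fin.card_filter_val_lt, min_eq_right hK]
      exact ⟨subset_univ _, rfl⟩
    exact (inf'_le _ hmem).trans_eq (sum_map _ _ _)

end SortedPrefix

section AvgKSmallest

variable {N K : ℕ}

lemma continuous_avgKSmallest (hK : K ≤ N) :
    Continuous (avgKSmallest K : (Fin N → ℝ) → ℝ) := by
  have h : avgKSmallest K = fun x : Fin N → ℝ => (powersetCard K (univ : Finset (Fin N))).inf'
      (powersetCard_nonempty.2 (by simpa using hK)) (fun s => ∑ j ∈ s, x j) / K := by
    funext x
    rw [avgKSmallest, sum_sort_filter_val_lt_eq_inf' hK]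
  rw [h]
  refine (Continuous.finset_inf'_apply _ fun s _ => ?_).div_const _
  fun_prop

lemma avgKSmallest_le_succ (hK : 1 ≤ K) (hKN : K < N) (x : Fin N → ℝ) :
    avgKSmallest K x ≤ avgKSmallest (K + 1) x := by
  set y := fun i => x (Tuple.sort x i)
  set S := ∑ i ∈ {i : Fin N | (i : ℕ) < K}, y i
  have hS : S ≤ K * y ⟨K, hKN⟩ := by
    have h := sum_le_card_nsmul ({i : Fin N | (i : ℕ) < K} : Finset (Fin N)) y (y ⟨K, hKN⟩)
      fun i hi => Tuple.monotone_sort x (Fin.le_def.2 (mem_filter.1 hi).2.le)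
    rwa [Fin.card_filter_val_lt, min_eq_right hKN.le, nsmul_eq_mul] at h
  have hsucc : avgKSmallest (K + 1) x = (y ⟨K, hKN⟩ + S) / (K + 1) := by
    rw [avgKSmallest, Fin.filter_val_lt_succ hKN, sum_insert (by simp)]
    push_cast
    rfl
  rw [hsucc, avgKSmallest, div_le_div_iff₀ (by positivity) (by positivity)]
  nlinarith

lemma abs_avgKSmallest_le (K : ℕ) (x : Fin N → ℝ) : |avgKSmallest K x| ≤ ∑ j, |x j| := by
  have hsum : |∑ i ∈ {i : Fin N | (i : ℕ) < K}, x (Tuple.sort x i)| ≤ ∑ j, |x j| :=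
    calc _ ≤ ∑ i ∈ {i : Fin N | (i : ℕ) < K}, |x (Tuple.sort x i)| := abs_sum_le_sum_abs _ _
      _ ≤ ∑ i, |x (Tuple.sort x i)| := sum_le_sum_of_subset_of_nonneg (subset_univ _)
          fun _ _ _ => abs_nonneg _
      _ = ∑ j, |x j| := Equiv.sum_comp (Tuple.sort x) fun j => |x j|
  rw [avgKSmallest, abs_div, Nat.abs_cast]
  rcases K.eq_zero_or_pos with rfl | hK
  · simpa using (abs_nonneg _).trans hsum
  · exact (div_le_self (abs_nonneg _) (by exact_mod_cast hK)).trans hsum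

end AvgKSmallest

section Fmax

variable {A : Type*} [Fintype A] [Nonempty A]

lemma continuous_fmax : Continuous (fmax : (A → ℝ) → ℝ) :=
  Continuous.finset_sup'_apply _ fun a _ => continuous_apply a

lemma fmax_mono {f g : A → ℝ} (h : f ≤ g) : fmax f ≤ fmax g :=
  sup'_mono_fun fun a _ => h a

lemma abs_fmax_le (f : A → ℝ) : |fmax f| ≤ ∑ a, |f a| := by
  obtain ⟨a, -, ha⟩ := exists_mem_eq_sup' univ_nonempty f
  rw [fmax, ha]
  exact single_le_sum (fun a _ => abs_nonneg (f a)) (mem_univ a)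

end Fmax

lemma integrable_fmax_avgKSmallest {Ω : Type*} [MeasurableSpace Ω] {μ : Measure Ω}
    {A : Type*} [Fintype A] [Nonempty A] {N K : ℕ} (hK : K ≤ N) {X : Fin N → A → Ω → ℝ}
    (hX : ∀ j a, Integrable (X j a) μ) :
    Integrable (fun ω => fmax fun a => avgKSmallest K fun j => X j a ω) μ := by
  have hcont : Continuous fun q : A → Fin N → ℝ => fmax fun a => avgKSmallest K (q a) :=
    continuous_fmax.comp (continuous_pi fun a => (continuous_avgKSmallest hK).comp
      (continuous_apply a))
  have hmeas : AEMeasurable (fun ω a j => X j a ω) μ :=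
    aemeasurable_pi_lambda _ fun a => aemeasurable_pi_lambda _ fun j => (hX j a).aemeasurable
  refine (integrable_finsetSum univ fun a _ => integrable_finsetSum univ fun j _ =>
    (hX j a).abs).mono' (hcont.measurable.comp_aemeasurable hmeas).aestronglyMeasurable
    (ae_of_all _ fun ω => ?_)
  rw [Real.norm_eq_abs]
  exact (abs_fmax_le _).trans (sum_le_sum fun a _ => abs_avgKSmallest_le K _)

theorem aqe_expected_bias_mono_in_keep_general
    {Ω : Type*} [MeasurableSpace Ω] (μ : Measure Ω) [IsProbabilityMeasure μ]
    {A : Type*} [Fintype A] [Nonempty A]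
    (Qpi : A → ℝ) (γ : ℝ) (hγ : 0 < γ)
    (N : ℕ)
    (e : Fin N → A → Ω → ℝ)
    (hint : ∀ j a, Integrable (e j a) μ)
    (Q : Fin N → A → Ω → ℝ) (hQ : ∀ j a ω, Q j a ω = Qpi a + e j a ω)
    (K : ℕ) (hK1 : 1 ≤ K) (hKN : K + 1 ≤ N) :
    ∫ ω, γ * (fmax (fun a => avgKSmallest K (fun j => Q j a ω)) - fmax Qpi) ∂μ
      ≤ ∫ ω, γ * (fmax (fun a => avgKSmallest (K + 1) (fun j => Q j a ω)) - fmax Qpi) ∂μ := by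
  have hQint : ∀ j a, Integrable (Q j a) μ := fun j a =>
    ((integrable_const (Qpi a)).add (hint j a)).congr (ae_of_all _ fun ω => (hQ j a ω).symm)
  have hZint : ∀ L ≤ N, Integrable (fun ω =>
      γ * (fmax (fun a => avgKSmallest L (fun j => Q j a ω)) - fmax Qpi)) μ := fun L hL =>
    ((integrable_fmax_avgKSmallest hL hQint).sub (integrable_const _)).const_mul γ
  refine integral_mono (hZint K (by omega)) (hZint (K + 1) hKN) fun ω => ?_
  have hmono := fmax_mono fun a => avgKSmallest_le_succ hK1 hKN fun j => Q j a ω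
  exact mul_le_mul_of_nonneg_left (sub_le_sub_right hmono _) hγ.le

/-- **Theorem 1, Part 2 (AQE).** In the tabular AQE setting, the expected post-update
estimation bias is nondecreasing in the keep parameter `K`:
for all `1 ≤ K ≤ N - 1`, `E[Z_{K,N}] ≤ E[Z_{K+1,N}]`. -/
theorem aqe_expected_bias_mono_in_keep
    {Ω : Type*} [MeasurableSpace Ω] (μ : Measure Ω) [IsProbabilityMeasure μ]
    {A : Type*} [Fintype A] [Nonempty A]
    (Qpi : A → ℝ) (γ : ℝ) (hγ : 0 < γ)
    (N : ℕ)
    (e : Fin N → A → Ω → ℝ)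
    (hint : ∀ j a, Integrable (e j a) μ)
    (hmean : ∀ j a, ∫ ω, e j a ω ∂μ = 0)
    (hident : ∀ j a j' a', IdentDistrib (e j a) (e j' a') μ μ)
    (hindep : iIndepFun
      (fun p : Fin N × A => e p.1 p.2) μ)
    (Q : Fin N → A → Ω → ℝ) (hQ : ∀ j a ω, Q j a ω = Qpi a + e j a ω)
    (K : ℕ) (hK1 : 1 ≤ K) (hKN : K + 1 ≤ N) :
    ∫ ω, γ * (fmax (fun a => avgKSmallest K (fun j => Q j a ω)) - fmax Qpi) ∂μ
      ≤ ∫ ω, γ * (fmax (fun a => avgKSmallest (K + 1) (fun j => Q j a ω)) - fmax Qpi) ∂μ :=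
  aqe_expected_bias_mono_in_keep_general μ Qpi γ hγ N e hint Q hQ K hK1 hKN
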